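/- For all real w > z, we have Φ(w)·w·e^{-z²/2} − Φ(z)·z·e^{-w²/2} > 0, and for w < z the reverse strict inequality holds. -/

import Mathlib

/-!
Put `h(w) = w e^{w²/2} Φ(w)`. Multiplying the difference by `e^{(z² + w²)/2} > 0` turns it into
`h(w) - h(z)`, so it suffices that `h` is strictly increasing. Now
`h'(w) = e^{w²/2} ((1 + w²) Φ(w) + w φ(w))`, and the bracket is positive: it is `(1 + w²)` times
`G(w) = Φ(w) + w φ(w) / (1 + w²)`, and `G' = 2 φ / (1 + w²)² > 0` with `G → 0` at `-∞`
(Gordon's lower bound for the Mills ratio).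
-/

open Real MeasureTheory Set Filter Topology

/-- The standard normal cumulative distribution function. -/
noncomputable def stdNormalCDF (w : ℝ) : ℝ :=
  ∫ x in Set.Iic w, (Real.sqrt (2 * Real.pi))⁻¹ * Real.exp (-x ^ 2 / 2)

theorem StrictMono.lt_of_tendsto_atBot {α β : Type*} [TopologicalSpace α] [Preorder α]
    [OrderClosedTopology α] [PartialOrder β] [IsCodirectedOrder β] [NoMinOrder β] {f : β → α}
    {a : α} (hf : StrictMono f) (ha : Tendsto f atBot (𝓝 a)) (b : β) : a < f b := by
  obtain ⟨c, hcb⟩ := exists_lt b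
  exact (hf.monotone.le_of_tendsto ha c).trans_lt (hf hcb)

theorem hasDerivAt_integral_Iic {E : Type*} [NormedAddCommGroup E] [NormedSpace ℝ E]
    [CompleteSpace E] {f : ℝ → E} (hfi : Integrable f) (hfc : Continuous f) (w : ℝ) :
    HasDerivAt (fun u => ∫ x in Iic u, f x) (f w) w := by
  have hsplit (u : ℝ) : ∫ x in Iic u, f x = (∫ x in Iic 0, f x) + ∫ x in 0..u, f x :=
    eq_add_of_sub_eq' (intervalIntegral.integral_Iic_sub_Iic (a := 0) (b := u)
      hfi.integrableOn hfi.integrableOn)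
  refine HasDerivAt.congr_of_eventuallyEq ?_ (Eventually.of_forall hsplit)
  exact (intervalIntegral.integral_hasDerivAt_right hfi.intervalIntegrable
    hfc.aestronglyMeasurable.stronglyMeasurableAtFilter hfc.continuousAt).const_add _

noncomputable def stdNormalPDF (x : ℝ) : ℝ :=
  (Real.sqrt (2 * π))⁻¹ * exp (-x ^ 2 / 2)

theorem stdNormalPDF_pos (x : ℝ) : 0 < stdNormalPDF x := by
  unfold stdNormalPDF; positivity

theorem continuous_stdNormalPDF : Continuous stdNormalPDF := by
  unfold stdNormalPDF; fun_prop

theorem integrable_stdNormalPDF : Integrable stdNormalPDF := by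
  refine ((integrable_exp_neg_mul_sq (b := 1 / 2) (by norm_num)).const_mul
    (Real.sqrt (2 * π))⁻¹).congr (Eventually.of_forall fun x => ?_)
  simp only [stdNormalPDF]
  ring_nf

theorem hasDerivAt_stdNormalPDF (x : ℝ) : HasDerivAt stdNormalPDF (-x * stdNormalPDF x) x := by
  have hexp : HasDerivAt (fun t => -t ^ 2 / 2) (-x) x :=
    ((hasDerivAt_pow 2 x).neg.div_const 2).congr_deriv (by ring)
  refine (((hasDerivAt_exp _).comp x hexp).const_mul (Real.sqrt (2 * π))⁻¹).congr_deriv ?_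
  simp only [stdNormalPDF]
  ring

theorem tendsto_stdNormalPDF_atBot : Tendsto stdNormalPDF atBot (𝓝 0) := by
  have hsq : Tendsto (fun x : ℝ => x ^ 2) atBot atTop :=
    (tendsto_id.atBot_mul_atBot₀ tendsto_id).congr fun x => (sq x).symm
  have hexp := tendsto_exp_atBot.comp
    ((tendsto_neg_atTop_atBot.comp hsq).atBot_div_const two_pos)
  rw [← mul_zero (Real.sqrt (2 * π))⁻¹]
  exact hexp.const_mul _

theorem hasDerivAt_stdNormalCDF (w : ℝ) : HasDerivAt stdNormalCDF (stdNormalPDF w) w :=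
  hasDerivAt_integral_Iic integrable_stdNormalPDF continuous_stdNormalPDF w

theorem tendsto_stdNormalCDF_atBot : Tendsto stdNormalCDF atBot (𝓝 0) :=
  tendsto_integral_Iic_zero tendsto_id

noncomputable def millsGap (w : ℝ) : ℝ :=
  stdNormalCDF w + w * stdNormalPDF w / (1 + w ^ 2)

theorem hasDerivAt_millsGap (w : ℝ) :
    HasDerivAt millsGap (2 * stdNormalPDF w / (1 + w ^ 2) ^ 2) w := by
  have hden : HasDerivAt (fun t => 1 + t ^ 2) (2 * w) w := by
    simpa using (hasDerivAt_pow 2 w).const_add 1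
  have hquot := ((hasDerivAt_id w).mul (hasDerivAt_stdNormalPDF w)).div hden (by positivity)
  refine ((hasDerivAt_stdNormalCDF w).add hquot).congr_deriv ?_
  simp only [id, Pi.mul_apply]
  field_simp
  ring

theorem tendsto_millsGap_atBot : Tendsto millsGap atBot (𝓝 0) := by
  have hquot : Tendsto (fun w => w * stdNormalPDF w / (1 + w ^ 2)) atBot (𝓝 0) := by
    refine squeeze_zero_norm (fun w => ?_) tendsto_stdNormalPDF_atBot
    have hφ := stdNormalPDF_pos w
    have habs : |w| ≤ 1 + w ^ 2 := by nlinarith [abs_nonneg w, sq_abs w]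
    have hden : (0 : ℝ) < 1 + w ^ 2 := by positivity
    rw [Real.norm_eq_abs, abs_div, abs_mul, abs_of_pos hφ, abs_of_pos hden, div_le_iff₀ hden]
    nlinarith
  rw [← add_zero (0 : ℝ)]
  exact tendsto_stdNormalCDF_atBot.add hquot

theorem millsGap_pos (w : ℝ) : 0 < millsGap w :=
  have hmono : StrictMono millsGap := strictMono_of_hasDerivAt_pos hasDerivAt_millsGap
    fun x => by have := stdNormalPDF_pos x; positivity
  hmono.lt_of_tendsto_atBot tendsto_millsGap_atBot w

noncomputable def scaledCDF (w : ℝ) : ℝ := w * exp (w ^ 2 / 2) * stdNormalCDF w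

theorem hasDerivAt_scaledCDF (w : ℝ) :
    HasDerivAt scaledCDF (exp (w ^ 2 / 2) * (1 + w ^ 2) * millsGap w) w := by
  have hexp : HasDerivAt (fun t => exp (t ^ 2 / 2)) (exp (w ^ 2 / 2) * w) w :=
    ((hasDerivAt_exp _).comp w ((hasDerivAt_pow 2 w).div_const 2)).congr_deriv (by ring)
  refine (((hasDerivAt_id w).mul hexp).mul (hasDerivAt_stdNormalCDF w)).congr_deriv ?_
  simp only [millsGap, id, Pi.mul_apply]
  field_simp

theorem strictMono_scaledCDF : StrictMono scaledCDF :=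
  strictMono_of_hasDerivAt_pos hasDerivAt_scaledCDF fun w => by
    have := millsGap_pos w; positivity

theorem stdNormalCDF_mul_mul_exp_sub (w z : ℝ) :
    stdNormalCDF w * w * exp (-z ^ 2 / 2) - stdNormalCDF z * z * exp (-w ^ 2 / 2)
      = (scaledCDF w - scaledCDF z) * (exp (-z ^ 2 / 2) * exp (-w ^ 2 / 2)) := by
  have hcancel (x : ℝ) : exp (x ^ 2 / 2) * exp (-x ^ 2 / 2) = 1 := by
    rw [← exp_add, neg_div, add_neg_cancel, exp_zero]
  simp only [scaledCDF]
  linear_combination (stdNormalCDF z * z * exp (-w ^ 2 / 2)) * hcancel z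
    - (stdNormalCDF w * w * exp (-z ^ 2 / 2)) * hcancel w

theorem stmt6 (w z : ℝ) :
    (z < w →
      0 < stdNormalCDF w * w * Real.exp (-z ^ 2 / 2)
            - stdNormalCDF z * z * Real.exp (-w ^ 2 / 2)) ∧
    (w < z →
      stdNormalCDF w * w * Real.exp (-z ^ 2 / 2)
        - stdNormalCDF z * z * Real.exp (-w ^ 2 / 2) < 0) := by
  rw [stdNormalCDF_mul_mul_exp_sub]
  have hexp : 0 < exp (-z ^ 2 / 2) * exp (-w ^ 2 / 2) := by positivity
  exact ⟨fun hzw => mul_pos (sub_pos.2 (strictMono_scaledCDF hzw)) hexp,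
    fun hwz => mul_neg_of_neg_of_pos (sub_neg.2 (strictMono_scaledCDF hwz)) hexp⟩
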